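/- Let ũ^n = (4/3)u^n − (1/3)u^{n−1} and suppose y^n ∈ X satisfies (2/(3δt))(3y^n − 4u^n + u^{n−1}) + M(y^n − ũ^n) + h(y^n) + 2f(u^n) − f(u^{n−1}) = 0, with δt < 2/(3L). Then with d^n = y^n − u^n, ⟨∇E^n(y^n), d^n⟩ ≤ −(2/(3δt) − L)‖d^n‖² − (5/6)‖d^n‖_M² + (1/6)‖u^n − u^{n−1}‖_M². -/

import Mathlib

/-!
Differentiating `Eⁿ` and eliminating `h yⁿ` through the optimality condition gives
`∇Eⁿ(yⁿ) = -(2/(3δt)) dⁿ - M (dⁿ - (uⁿ - uⁿ⁻¹)/3) + (f yⁿ - f uⁿ)`. Pairing with `dⁿ`, the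
Lipschitz bound controls the `f`-term by `L ‖dⁿ‖²`, and the cross term `⟪M (uⁿ - uⁿ⁻¹), dⁿ⟫ / 3`
is absorbed by Cauchy–Schwarz for the positive semidefinite form `⟪M ·, ·⟫`.
-/

open scoped RealInnerProductSpace

section Gradient

variable {X : Type*} [NormedAddCommGroup X] [InnerProductSpace ℝ X] [CompleteSpace X]
  {f g : X → ℝ} {f' g' x : X}

theorem HasGradientAt.add (hf : HasGradientAt f f' x) (hg : HasGradientAt g g' x) :
    HasGradientAt (fun u => f u + g u) (f' + g') x := by
  rw [hasGradientAt_iff_hasFDerivAt, map_add] at *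
  exact hf.fun_add hg

theorem HasGradientAt.sub (hf : HasGradientAt f f' x) (hg : HasGradientAt g g' x) :
    HasGradientAt (fun u => f u - g u) (f' - g') x := by
  rw [hasGradientAt_iff_hasFDerivAt, map_sub] at *
  exact hf.fun_sub hg

theorem HasGradientAt.const_mul (c : ℝ) (hf : HasGradientAt f f' x) :
    HasGradientAt (fun u => c * f u) (c • f') x := by
  rw [hasGradientAt_iff_hasFDerivAt, map_smul] at *
  exact hf.fun_const_smul c

theorem hasGradientAt_inner_sub_const (w c x : X) :
    HasGradientAt (fun u => ⟪w, u - c⟫) w x := by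
  rw [hasGradientAt_iff_hasFDerivAt]
  exact (InnerProductSpace.toDual ℝ X w).hasFDerivAt.comp x (hasFDerivAt_sub_const c)

theorem hasGradientAt_norm_sub_sq (c x : X) :
    HasGradientAt (fun u => ‖u - c‖ ^ 2) ((2 : ℝ) • (x - c)) x := by
  rw [hasGradientAt_iff_hasFDerivAt]
  have hdual : InnerProductSpace.toDual ℝ X ((2 : ℝ) • (x - c))
      = 2 • (innerSL ℝ (x - c)).comp (.id ℝ X) := by
    ext v
    simp
  rw [hdual]
  exact (hasFDerivAt_sub_const c).norm_sq

end Gradient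

section Descent

variable {E : Type*} [SeminormedAddCommGroup E] [InnerProductSpace ℝ E]

theorem real_inner_le_mul_norm_sq_of_norm_le {a b : E} {L : ℝ} (h : ‖a‖ ≤ L * ‖b‖) :
    ⟪a, b⟫ ≤ L * ‖b‖ ^ 2 :=
  calc ⟪a, b⟫ ≤ ‖a‖ * ‖b‖ := real_inner_le_norm a b
    _ ≤ L * ‖b‖ * ‖b‖ := by gcongr
    _ = L * ‖b‖ ^ 2 := by ring

theorem two_mul_inner_le_of_symmetric_of_nonneg (M : E →L[ℝ] E)
    (hsym : ∀ x y : E, ⟪M x, y⟫ = ⟪x, M y⟫) (hnonneg : ∀ x : E, 0 ≤ ⟪M x, x⟫) (v w : E) :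
    2 * ⟪M v, w⟫ ≤ ⟪M v, v⟫ + ⟪M w, w⟫ := by
  have hvw : ⟪M w, v⟫ = ⟪M v, w⟫ := by rw [hsym, real_inner_comm]
  have := hnonneg (v - w)
  simp only [map_sub, inner_sub_left, inner_sub_right] at this
  linarith

theorem inner_le_of_eq_neg_smul_sub_add (M : E →L[ℝ] E)
    (hsym : ∀ x y : E, ⟪M x, y⟫ = ⟪x, M y⟫) (hnonneg : ∀ x : E, 0 ≤ ⟪M x, x⟫)
    {g d w e : E} {c L : ℝ} (hg : g = -c • d - M (d - (1 / 3 : ℝ) • w) + e)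
    (he : ‖e‖ ≤ L * ‖d‖) :
    ⟪g, d⟫ ≤ -(c - L) * ‖d‖ ^ 2 - (5 / 6) * ⟪M d, d⟫ + (1 / 6) * ⟪M w, w⟫ := by
  have hexpand : ⟪g, d⟫ = -c * ‖d‖ ^ 2 - ⟪M d, d⟫ + (1 / 3) * ⟪M w, d⟫ + ⟪e, d⟫ := by
    rw [hg, map_sub, map_smul]
    simp only [inner_add_left, inner_sub_left, real_inner_smul_left, real_inner_self_eq_norm_sq]
    ring
  have hcross := two_mul_inner_le_of_symmetric_of_nonneg M hsym hnonneg w d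
  have he_d := real_inner_le_mul_norm_sq_of_norm_le he
  linarith

end Descent

theorem descent_estimate_util_general
    {X : Type*} [NormedAddCommGroup X] [InnerProductSpace ℝ X] [FiniteDimensional ℝ X]
    (H : X → ℝ) (h : X → X) (hH : ∀ x : X, HasGradientAt H (h x) x)
    (F : X → ℝ) (f : X → X) (hF : ∀ x : X, HasGradientAt F (f x) x)
    (L : ℝ) (hLip : ∀ x y : X, ‖f x - f y‖ ≤ L * ‖x - y‖)
    (δt : ℝ)
    (M : X →L[ℝ] X) (hMsym : ∀ x y : X, ⟪M x, y⟫ = ⟪x, M y⟫)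
    (hMpsd : ∀ x : X, 0 ≤ ⟪M x, x⟫)
    (un unm1 : X)
    (Hn Fn En : X → ℝ)
    (hHn : ∀ u : X, Hn u = H u + (1 / δt) * ‖u - un‖ ^ 2)
    (hFn : ∀ u : X, Fn u = (1 / (3 * δt)) * ‖u - unm1‖ ^ 2 - F u
      - ⟪f un - f unm1, u - unm1⟫)
    (hEn : ∀ u : X, En u = Hn u - Fn u)
    (util : X) (hutil : util = (4 / 3 : ℝ) • un - (1 / 3 : ℝ) • unm1)
    (yn : X)
    (hopt : (2 / (3 * δt)) • ((3 : ℝ) • yn - (4 : ℝ) • un + unm1) + M (yn - util)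
      + h yn + (2 : ℝ) • f un - f unm1 = 0) :
    ⟪gradient En yn, yn - un⟫ ≤ -(2 / (3 * δt) - L) * ‖yn - un‖ ^ 2
      - (5 / 6) * ⟪M (yn - un), yn - un⟫ + (1 / 6) * ⟪M (un - unm1), un - unm1⟫ := by
  have hEn_eq : En = fun u => (H u + (1 / δt) * ‖u - un‖ ^ 2)
      - ((1 / (3 * δt)) * ‖u - unm1‖ ^ 2 - F u - ⟪f un - f unm1, u - unm1⟫) :=
    funext fun u => by rw [hEn, hHn, hFn]
  have hgrad : HasGradientAt En ((h yn + (1 / δt) • (2 : ℝ) • (yn - un))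
      - ((1 / (3 * δt)) • (2 : ℝ) • (yn - unm1) - f yn - (f un - f unm1))) yn :=
    hEn_eq ▸ ((hH yn).add ((hasGradientAt_norm_sub_sq un yn).const_mul _)).sub
      ((((hasGradientAt_norm_sub_sq unm1 yn).const_mul _).sub (hF yn)).sub
        (hasGradientAt_inner_sub_const _ _ _))
  have hyutil : yn - util = (yn - un) - (1 / 3 : ℝ) • (un - unm1) := by
    rw [hutil]
    module
  have hgrad_eq : gradient En yn = -(2 / (3 * δt)) • (yn - un)
      - M ((yn - un) - (1 / 3 : ℝ) • (un - unm1)) + (f yn - f un) := by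
    rw [hgrad.gradient, ← hyutil]
    linear_combination (norm := module) hopt
  exact inner_le_of_eq_neg_smul_sub_add M hMsym hMpsd hgrad_eq (hLip yn un)

/-- Descent estimate of `dⁿ = yⁿ - uⁿ` for `Eⁿ` at `yⁿ` in the extrapolated case `ûⁿ = ũⁿ`. -/
theorem descent_estimate_util
    {X : Type*} [NormedAddCommGroup X] [InnerProductSpace ℝ X] [FiniteDimensional ℝ X]
    (H : X → ℝ) (h : X → X) (hH : ∀ x : X, HasGradientAt H (h x) x)
    (hHconv : ConvexOn ℝ Set.univ H)
    (F : X → ℝ) (f : X → X) (hF : ∀ x : X, HasGradientAt F (f x) x)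
    (L : ℝ) (hL : 0 < L) (hLip : ∀ x y : X, ‖f x - f y‖ ≤ L * ‖x - y‖)
    (δt : ℝ) (hδt : 0 < δt) (hδt2 : δt < 2 / (3 * L))
    (M : X →L[ℝ] X) (hMsym : ∀ x y : X, ⟪M x, y⟫ = ⟪x, M y⟫)
    (hMpsd : ∀ x : X, 0 ≤ ⟪M x, x⟫)
    (un unm1 : X)
    (Hn Fn En : X → ℝ)
    (hHn : ∀ u : X, Hn u = H u + (1 / δt) * ‖u - un‖ ^ 2)
    (hFn : ∀ u : X, Fn u = (1 / (3 * δt)) * ‖u - unm1‖ ^ 2 - F u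
      - ⟪f un - f unm1, u - unm1⟫)
    (hEn : ∀ u : X, En u = Hn u - Fn u)
    (util : X) (hutil : util = (4 / 3 : ℝ) • un - (1 / 3 : ℝ) • unm1)
    (yn : X)
    (hopt : (2 / (3 * δt)) • ((3 : ℝ) • yn - (4 : ℝ) • un + unm1) + M (yn - util)
      + h yn + (2 : ℝ) • f un - f unm1 = 0) :
    ⟪gradient En yn, yn - un⟫ ≤ -(2 / (3 * δt) - L) * ‖yn - un‖ ^ 2
      - (5 / 6) * ⟪M (yn - un), yn - un⟫ + (1 / 6) * ⟪M (un - unm1), un - unm1⟫ :=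
  descent_estimate_util_general H h hH F f hF L hLip δt M hMsym hMpsd un unm1 Hn Fn En hHn hFn hEn
    util hutil yn hopt
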